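/- arXiv:1901.06840 — 3 statements merged into one kernel-verified Lean document; each statement's English description precedes it below -/
import Mathlib

section
/- Sphere-packing bound for indexed-set codes: any (t, ε₁, ε₂)-indexed-set code C ⊆ I_M^L satisfies |C| ≤ 2^{M·L_M} / (C(M,t) · (B_{ε₂}(L_M) - 1)^t), where L_M = L - log M, C(M,t) is the binomial coefficient, and B_r(n) = Σ_{i=0}^{r} C(n,i) is the size of the Hamming ball of radius r. -/
/-!
For each codeword `u`, the words `u + e`, where `e` corrupts exactly `t` of the `M` data parts
by nonzero errors of weight at most `ε₂`, are all channel outputs of `u` (with the indices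
left intact). Disjointness of the output sets makes `(u, e) ↦ u + e` injective, so the
`|C| · C(M,t) · (B_{ε₂}(L_M) - 1)^t` pairs fit into the `2^{M·L_M}` possible data arrays.
-/

open scoped Classical

/-- Size of the Hamming ball of radius `r` in `{0,1}^n`. -/
def ballB (r n : ℕ) : ℕ := ∑ i ∈ Finset.range (r + 1), n.choose i

/-- The set of possible outputs of the `(t,ε₁,ε₂)`-channel on the indexed set determined by
the index map `I` and data parts `u`: at most `t` sequences are corrupted, each by at most
`ε₁` substitutions in the index and at most `ε₂` substitutions in the data part. -/
def chanOut {M m LM : ℕ} (t ε₁ ε₂ : ℕ) (I : Fin M → Fin m → ZMod 2)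
    (u : Fin M → Fin LM → ZMod 2) :
    Set (Finset ((Fin m → ZMod 2) × (Fin LM → ZMod 2))) :=
  { S' | ∃ (eI : Fin M → Fin m → ZMod 2) (eD : Fin M → Fin LM → ZMod 2),
      (Finset.univ.filter (fun i => ¬(eI i = 0 ∧ eD i = 0))).card ≤ t ∧
      (∀ i, hammingNorm (eI i) ≤ ε₁) ∧ (∀ i, hammingNorm (eD i) ≤ ε₂) ∧
      S' = Finset.image (fun i => (I i + eI i, u i + eD i)) Finset.univ }

open Finset

section ErrorPatterns

variable {ι α : Type*} [Fintype ι] [DecidableEq ι] [Zero α] [DecidableEq α]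

def errorPatterns (t : ℕ) (E : Finset α) : Finset (ι → α) :=
  (powersetCard t univ).biUnion fun s => Fintype.piFinset fun i => if i ∈ s then E else {0}

variable {E : Finset α}

lemma mem_piFinset_ite_zero_iff (h0 : (0 : α) ∉ E) {s : Finset ι} {e : ι → α} :
    e ∈ Fintype.piFinset (fun i => if i ∈ s then E else {0}) ↔
      ({i | e i ≠ 0} : Finset ι) = s ∧ ∀ i, e i ≠ 0 → e i ∈ E := by
  simp only [Fintype.mem_piFinset]
  constructor
  · intro he
    have hsupp : ({i | e i ≠ 0} : Finset ι) = s := by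
      ext i
      specialize he i
      by_cases hi : i ∈ s
      · simp only [hi, if_true] at he
        simp [hi, ne_of_mem_of_not_mem he h0]
      · simp_all
    refine ⟨hsupp, fun i hi => ?_⟩
    have his : i ∈ s := hsupp ▸ mem_filter.2 ⟨mem_univ i, hi⟩
    simpa [his] using he i
  · rintro ⟨rfl, hE⟩ i
    by_cases hi : e i = 0 <;> simp [hi, hE]

lemma mem_errorPatterns (h0 : (0 : α) ∉ E) {t : ℕ} {e : ι → α} :
    e ∈ errorPatterns t E ↔ hammingNorm e = t ∧ ∀ i, e i ≠ 0 → e i ∈ E := by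
  simp only [errorPatterns, mem_biUnion, mem_powersetCard, mem_piFinset_ite_zero_iff h0]
  constructor
  · rintro ⟨s, ⟨-, rfl⟩, rfl, hE⟩
    exact ⟨rfl, hE⟩
  · rintro ⟨ht, hE⟩
    exact ⟨_, ⟨subset_univ _, ht⟩, rfl, hE⟩

lemma card_errorPatterns (h0 : (0 : α) ∉ E) (t : ℕ) :
    #(errorPatterns t E : Finset (ι → α)) = (Fintype.card ι).choose t * #E ^ t := by
  have hdisj : ((powersetCard t univ : Finset (Finset ι)) : Set (Finset ι)).PairwiseDisjoint
      fun s => Fintype.piFinset fun i => if i ∈ s then E else {0} := by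
    intro s _ s' _ hss'
    refine disjoint_left.2 fun e hs hs' => hss' ?_
    rw [mem_piFinset_ite_zero_iff h0] at hs hs'
    exact hs.1.symm.trans hs'.1
  rw [errorPatterns, card_biUnion hdisj, ← card_univ, ← card_powersetCard, ← smul_eq_mul,
    ← sum_const]
  refine sum_congr rfl fun s hs => ?_
  rw [Fintype.card_piFinset, ← (mem_powersetCard.1 hs).2, ← prod_const]
  simp [apply_ite card, prod_ite_mem]

end ErrorPatterns

section HammingBall

variable {ι : Type*} [Fintype ι] [DecidableEq ι]

lemma card_hammingNorm_eq (k : ℕ) :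
    #{v : ι → ZMod 2 | hammingNorm v = k} = (Fintype.card ι).choose k := by
  have h0 : (0 : ZMod 2) ∉ ({1} : Finset (ZMod 2)) := by decide
  have hunit : ∀ a : ZMod 2, a ≠ 0 → a = 1 := by decide
  have hfilter : ({v : ι → ZMod 2 | hammingNorm v = k} : Finset _) = errorPatterns k {1} := by
    ext v
    simp only [mem_filter, mem_univ, true_and, mem_errorPatterns h0, mem_singleton]
    exact ⟨fun h => ⟨h, fun i => hunit (v i)⟩, And.left⟩
  rw [hfilter, card_errorPatterns h0, card_singleton, one_pow, mul_one]

lemma card_hammingNorm_le (r : ℕ) :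
    #{v : ι → ZMod 2 | hammingNorm v ≤ r} = ballB r (Fintype.card ι) := by
  rw [card_eq_sum_card_fiberwise (f := hammingNorm) (t := range (r + 1))
    fun v hv => mem_range.2 (Nat.lt_succ_of_le (mem_filter.1 hv).2)]
  refine sum_congr rfl fun k hk => ?_
  rw [filter_filter, ← card_hammingNorm_eq]
  congr 1
  exact filter_congr fun v _ =>
    and_iff_right_of_imp fun h => h ▸ Nat.lt_succ_iff.1 (mem_range.1 hk)

lemma card_ne_zero_hammingNorm_le (r : ℕ) :
    #{v : ι → ZMod 2 | v ≠ 0 ∧ hammingNorm v ≤ r} = ballB r (Fintype.card ι) - 1 := by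
  rw [← card_hammingNorm_le, ← card_erase_of_mem (a := 0) (by simp)]
  congr 1
  ext v
  simp

end HammingBall

lemma card_mul_card_le_card_of_injOn_add {G : Type*} [Fintype G] [Add G] {A B : Finset G}
    (h : Set.InjOn (fun p : G × G => p.1 + p.2) (A ×ˢ B : Finset (G × G))) :
    #A * #B ≤ Fintype.card G := by
  rw [coe_product, ← card_image₂_iff] at h
  exact h ▸ card_le_univ _

section Channel

variable {M m LM t ε₁ ε₂ : ℕ} {I : Fin M → Fin m → ZMod 2}

lemma image_add_mem_chanOut (u e : Fin M → Fin LM → ZMod 2) (he : hammingNorm e ≤ t)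
    (hε₂ : ∀ i, hammingNorm (e i) ≤ ε₂) :
    image (fun i => (I i, (u + e) i)) univ ∈ chanOut t ε₁ ε₂ I u :=
  ⟨0, e, by simpa [hammingNorm] using he, by simp, hε₂, by simp⟩

lemma injOn_add_of_chanOut_disjoint {C D : Finset (Fin M → Fin LM → ZMod 2)}
    (hcode : ∀ u₁ ∈ C, ∀ u₂ ∈ C, u₁ ≠ u₂ →
      chanOut t ε₁ ε₂ I u₁ ∩ chanOut t ε₁ ε₂ I u₂ = ∅)
    (hD : ∀ e ∈ D, hammingNorm e ≤ t ∧ ∀ i, hammingNorm (e i) ≤ ε₂) :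
    Set.InjOn (fun p : (Fin M → Fin LM → ZMod 2) × _ => p.1 + p.2) (C ×ˢ D : Finset _) := by
  rintro ⟨u₁, e₁⟩ h₁ ⟨u₂, e₂⟩ h₂ (heq : u₁ + e₁ = u₂ + e₂)
  simp only [coe_product, Set.mem_prod, mem_coe] at h₁ h₂
  obtain rfl : u₁ = u₂ := by
    by_contra hne
    have hout₁ := image_add_mem_chanOut (I := I) (ε₁ := ε₁) u₁ e₁ (hD e₁ h₁.2).1 (hD e₁ h₁.2).2
    have hout₂ := image_add_mem_chanOut (I := I) (ε₁ := ε₁) u₂ e₂ (hD e₂ h₂.2).1 (hD e₂ h₂.2).2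
    rw [← heq] at hout₂
    exact (hcode u₁ h₁.1 u₂ h₂.1 hne).subset ⟨hout₁, hout₂⟩
  rw [add_left_cancel heq]

end Channel

theorem sphere_packing_bound_general (M m LM t ε₁ ε₂ : ℕ)
    (I : Fin M → Fin m → ZMod 2)
    (C : Finset (Fin M → Fin LM → ZMod 2))
    (hcode : ∀ u₁ ∈ C, ∀ u₂ ∈ C, u₁ ≠ u₂ →
      chanOut t ε₁ ε₂ I u₁ ∩ chanOut t ε₁ ε₂ I u₂ = ∅) :
    C.card * (M.choose t * (ballB ε₂ LM - 1) ^ t) ≤ 2 ^ (M * LM) := by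
  set E : Finset (Fin LM → ZMod 2) := {v | v ≠ 0 ∧ hammingNorm v ≤ ε₂}
  have h0 : (0 : Fin LM → ZMod 2) ∉ E := by simp [E]
  have hinj := injOn_add_of_chanOut_disjoint (D := errorPatterns t E) hcode fun e he => by
    rw [mem_errorPatterns h0] at he
    refine ⟨he.1.le, fun i => ?_⟩
    by_cases hi : e i = 0
    · simp [hi]
    · exact (mem_filter.1 (he.2 i hi)).2.2
  calc C.card * (M.choose t * (ballB ε₂ LM - 1) ^ t)
      = #C * #(errorPatterns t E) := by
        rw [card_errorPatterns h0, card_ne_zero_hammingNorm_le, Fintype.card_fin, Fintype.card_fin]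
    _ ≤ Fintype.card (Fin M → Fin LM → ZMod 2) := card_mul_card_le_card_of_injOn_add hinj
    _ = 2 ^ (M * LM) := by simp [pow_mul, mul_comm M LM]

/-- sphere-packing bound. Any `(t,ε₁,ε₂)`-indexed-set code `C` satisfies
`|C| ≤ 2^{M·L_M} / (C(M,t)·(B_{ε₂}(L_M) - 1)^t)`, stated multiplicatively. -/
theorem sphere_packing_bound (M m LM t ε₁ ε₂ : ℕ) (hM : M = 2 ^ m)
    (ht : t ≤ M) (hε₂ : 1 ≤ ε₂)
    (I : Fin M → Fin m → ZMod 2) (hI : Function.Injective I)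
    (C : Finset (Fin M → Fin LM → ZMod 2))
    (hcode : ∀ u₁ ∈ C, ∀ u₂ ∈ C, u₁ ≠ u₂ →
      chanOut t ε₁ ε₂ I u₁ ∩ chanOut t ε₁ ε₂ I u₂ = ∅) :
    C.card * (M.choose t * (ballB ε₂ LM - 1) ^ t) ≤ 2 ^ (M * LM) :=
  sphere_packing_bound_general M m LM t ε₁ ε₂ I C hcode
end

section
/- For an indexed set S, the number of channel outputs of the (t,0,ε₂)-channel (no index errors) that are again valid indexed sets is at most C(M,t)·(B_{ε₂}(L_M))^t, and when exactly t rows are corrupted with index errors allowed that permute erroneous sequences among themselves, the number of outputs that remain valid indexed sets is at most C(M,t)·t!·(B_{ε₂}(L_M))^t. -/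
/-!
A received set that is again a valid indexed set carries every index exactly once, so the
corrupted indices `I i + eI i` are `I (σ i)` for a permutation `σ` of the rows; `σ` fixes every
row without an index error, hence is the identity when index errors are excluded. Enlarging the
set of erroneous rows to a set `T` of exactly `t` rows, each such output is determined by `T`
(`C(M,t)` choices), a permutation supported in `T` (at most `t!` choices, or only the identity)
and a data error of weight at most `ε₂` on each row of `T` (at most `B_{ε₂}(L_M)` choices per
row).
-/

open scoped Classical

/-- A received set of sequences is a valid indexed set if it consists of `M` sequences
carrying each of the `M` index values exactly once. -/
def isIndexed {M m LM : ℕ} (I : Fin M → Fin m → ZMod 2)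
    (S : Finset ((Fin m → ZMod 2) × (Fin LM → ZMod 2))) : Prop :=
  ∃ u : Fin M → Fin LM → ZMod 2,
    S = Finset.image (fun i => (I i, u i)) Finset.univ

open Finset Equiv

lemma filter_ne_zero_injective {ι : Type*} [Fintype ι] :
    Function.Injective fun e : ι → ZMod 2 => ({i | e i ≠ 0} : Finset ι) := by
  intro e e' h
  funext i
  have hbit : ∀ a b : ZMod 2, (a ≠ 0 ↔ b ≠ 0) → a = b := by decide
  exact hbit _ _ (by simpa using congrArg (i ∈ ·) h)

lemma card_hammingNorm_le_s9 (r n : ℕ) :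
    #{e : Fin n → ZMod 2 | hammingNorm e ≤ r} ≤ ballB r n :=
  calc #{e : Fin n → ZMod 2 | hammingNorm e ≤ r}
      ≤ #((range (r + 1)).biUnion fun k => powersetCard k (univ : Finset (Fin n))) :=
        card_le_card_of_injOn (fun e => ({i | e i ≠ 0} : Finset (Fin n)))
          (fun e he => by simpa [Nat.lt_succ_iff, hammingNorm] using he)
          filter_ne_zero_injective.injOn
    _ ≤ ∑ k ∈ range (r + 1), #(powersetCard k (univ : Finset (Fin n))) := card_biUnion_le
    _ = ballB r n := by simp [ballB]

lemma card_perm_support_subset_le {α : Type*} [Fintype α] [DecidableEq α] (T : Finset α) :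
    #{σ : Perm α | σ.support ⊆ T} ≤ (#T).factorial :=
  calc #{σ : Perm α | σ.support ⊆ T}
      ≤ #(univ.image (Perm.ofSubtype : Perm T → Perm α)) := card_le_card fun σ hσ => by
        obtain ⟨τ, hτ⟩ := Perm.mem_range_ofSubtype_iff.2 fun x hx => (mem_filter.1 hσ).2 hx
        exact mem_image.2 ⟨τ, mem_univ _, hτ⟩
    _ ≤ Fintype.card (Perm T) := card_image_le
    _ = (#T).factorial := by simp [Fintype.card_perm]

lemma exists_perm_comp_eq_of_image_univ_eq {ι β : Type*} [Fintype ι] [DecidableEq β]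
    {g h : ι → β} (hh : Function.Injective h) (himg : univ.image g = univ.image h) :
    ∃ σ : Perm ι, g = h ∘ σ := by
  have hmem : ∀ i, ∃ j, h j = g i := fun i => by
    simpa using (himg ▸ mem_image_of_mem g (mem_univ i) : g i ∈ univ.image h)
  choose f hf using hmem
  have hsurj : Function.Surjective f := fun j => by
    obtain ⟨i, hi⟩ : ∃ i, g i = h j := by
      simpa using (himg ▸ mem_image_of_mem h (mem_univ j) : h j ∈ univ.image g)
    exact ⟨i, hh (by rw [hf, hi])⟩
  exact ⟨.ofBijective f (Finite.surjective_iff_bijective.1 hsurj), funext fun i => (hf i).symm⟩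

def errorsOn {ι : Type*} [Fintype ι] [DecidableEq ι] {n : ℕ} (r : ℕ) (T : Finset ι) :
    Finset (ι → Fin n → ZMod 2) :=
  Fintype.piFinset fun i =>
    if i ∈ T then ({e | hammingNorm e ≤ r} : Finset (Fin n → ZMod 2)) else {0}

lemma card_errorsOn_le {ι : Type*} [Fintype ι] [DecidableEq ι] (n r : ℕ) (T : Finset ι) :
    #(errorsOn (n := n) r T) ≤ ballB r n ^ #T :=
  calc #(errorsOn (n := n) r T)
      = ∏ i, if i ∈ T then #{e : Fin n → ZMod 2 | hammingNorm e ≤ r} else 1 := by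
        rw [errorsOn, Fintype.card_piFinset]
        exact prod_congr rfl fun i _ => by split_ifs <;> rfl
    _ = #{e : Fin n → ZMod 2 | hammingNorm e ≤ r} ^ #T := by
        rw [prod_ite_mem, univ_inter, prod_const]
    _ ≤ ballB r n ^ #T := Nat.pow_le_pow_left (card_hammingNorm_le_s9 r n) _

def indexedOutput {M m LM : ℕ} (I : Fin M → Fin m → ZMod 2) (u : Fin M → Fin LM → ZMod 2)
    (σ : Perm (Fin M)) (eD : Fin M → Fin LM → ZMod 2) :
    Finset ((Fin m → ZMod 2) × (Fin LM → ZMod 2)) :=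
  univ.image fun i => (I (σ i), u i + eD i)

lemma exists_eq_indexedOutput {M m LM t ε₁ ε₂ : ℕ} (ht : t ≤ M)
    {I : Fin M → Fin m → ZMod 2} (hI : Function.Injective I) {u : Fin M → Fin LM → ZMod 2}
    {S' : Finset ((Fin m → ZMod 2) × (Fin LM → ZMod 2))}
    (hS' : S' ∈ chanOut t ε₁ ε₂ I u) (hidx : isIndexed I S') :
    ∃ T : Finset (Fin M), #T = t ∧ ∃ σ : Perm (Fin M), σ.support ⊆ T ∧ (ε₁ = 0 → σ = 1) ∧
      ∃ eD ∈ errorsOn ε₂ T, S' = indexedOutput I u σ eD := by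
  obtain ⟨eI, eD, hcard, hεI, hεD, rfl⟩ := hS'
  obtain ⟨v, hv⟩ := hidx
  obtain ⟨σ, hσ⟩ := exists_perm_comp_eq_of_image_univ_eq (h := fun i => (I i, v i))
    (fun i j hij => hI (congrArg Prod.fst hij)) hv
  have hIσ : ∀ i, I (σ i) = I i + eI i := fun i => (congrArg Prod.fst (congrFun hσ i)).symm
  have hfix : ∀ i, eI i = 0 → σ i = i := fun i h0 => hI (by simp [hIσ, h0])
  obtain ⟨T, hCT, -, hT⟩ := exists_subsuperset_card_eq (subset_univ _) hcard (by simpa using ht)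
  have hclean : ∀ i ∉ T, eI i = 0 ∧ eD i = 0 := fun i hi => by simpa using mt (@hCT i) hi
  have hsupp : σ.support ⊆ T := fun i hi =>
    by_contra fun hiT => Perm.mem_support.1 hi (hfix i (hclean i hiT).1)
  have hone : ε₁ = 0 → σ = 1 := fun h0 => Perm.ext fun i =>
    hfix i (hammingNorm_eq_zero.1 (Nat.le_zero.1 (h0 ▸ hεI i)))
  have heD : eD ∈ errorsOn ε₂ T := Fintype.mem_piFinset.2 fun i => by
    split_ifs with hi
    · simpa using hεD i
    · simpa using (hclean i hi).2
  exact ⟨T, hT, σ, hsupp, hone, eD, heD, image_congr fun i _ => by simp [hIσ]⟩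

lemma ncard_le_of_forall_eq_indexedOutput {M m LM t r p : ℕ} (I : Fin M → Fin m → ZMod 2)
    (u : Fin M → Fin LM → ZMod 2) (S : Set (Finset ((Fin m → ZMod 2) × (Fin LM → ZMod 2))))
    (P : Finset (Fin M) → Finset (Perm (Fin M)))
    (hP : ∀ T : Finset (Fin M), #T = t → #(P T) ≤ p)
    (hS : ∀ S' ∈ S, ∃ T : Finset (Fin M), #T = t ∧
      ∃ σ ∈ P T, ∃ eD ∈ errorsOn r T, S' = indexedOutput I u σ eD) :
    S.ncard ≤ M.choose t * p * ballB r LM ^ t :=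
  calc S.ncard
      ≤ #((powersetCard t univ).biUnion fun T =>
          (P T ×ˢ errorsOn r T).image fun x => indexedOutput I u x.1 x.2) := by
        rw [← Set.ncard_coe_finset]
        refine Set.ncard_le_ncard fun S' hS' => ?_
        obtain ⟨T, hT, σ, hσ, eD, heD, rfl⟩ := hS S' hS'
        exact mem_biUnion.2 ⟨T, mem_powersetCard.2 ⟨subset_univ T, hT⟩,
          mem_image.2 ⟨(σ, eD), mem_product.2 ⟨hσ, heD⟩, rfl⟩⟩
    _ ≤ #(powersetCard t (univ : Finset (Fin M))) * (p * ballB r LM ^ t) :=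
        card_biUnion_le_card_mul _ _ _ fun T hT =>
          have hT : #T = t := (mem_powersetCard.1 hT).2
          card_image_le.trans <| (card_product _ _).trans_le <|
            Nat.mul_le_mul (hP T hT) (hT ▸ card_errorsOn_le LM r T)
    _ = M.choose t * p * ballB r LM ^ t := by rw [card_powersetCard, card_fin, mul_assoc]

theorem count_indexed_outputs_general (M m LM t ε₂ : ℕ) (ht : t ≤ M)
    (I : Fin M → Fin m → ZMod 2) (hI : Function.Injective I)
    (u : Fin M → Fin LM → ZMod 2) :
    Set.ncard { S' ∈ chanOut t 0 ε₂ I u | isIndexed I S' }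
      ≤ M.choose t * (ballB ε₂ LM) ^ t ∧
    Set.ncard { S' ∈ chanOut t m ε₂ I u | isIndexed I S' }
      ≤ M.choose t * t.factorial * (ballB ε₂ LM) ^ t := by
  constructor
  · have := ncard_le_of_forall_eq_indexedOutput (p := 1) I u
      {S' ∈ chanOut t 0 ε₂ I u | isIndexed I S'} (fun _ => {1}) (by simp)
      fun S' hS' => by
        obtain ⟨T, hT, σ, -, hσ, eD, heD, rfl⟩ := exists_eq_indexedOutput ht hI hS'.1 hS'.2
        exact ⟨T, hT, σ, by simp [hσ rfl], eD, heD, rfl⟩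
    simpa using this
  · refine ncard_le_of_forall_eq_indexedOutput I u _ (fun T => {σ | σ.support ⊆ T})
      (fun T hT => hT ▸ card_perm_support_subset_le T) fun S' ⟨hS', hidx⟩ => ?_
    obtain ⟨T, hT, σ, hσT, -, eD, heD, rfl⟩ := exists_eq_indexedOutput ht hI hS' hidx
    exact ⟨T, hT, σ, by simpa using hσT, eD, heD, rfl⟩

/-- (i) the number of outputs of the `(t,0,ε₂)`-channel (no index errors) that
are valid indexed sets is at most `C(M,t)·(B_{ε₂}(L_M))^t`; (ii) allowing index errors
(which, to stay a valid indexed set, can only permute the indices of the erroneous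
sequences among themselves), the number of outputs that are valid indexed sets is at most
`C(M,t)·t!·(B_{ε₂}(L_M))^t`. -/
theorem count_indexed_outputs (M m LM t ε₂ : ℕ) (hM : M = 2 ^ m) (ht : t ≤ M)
    (I : Fin M → Fin m → ZMod 2) (hI : Function.Injective I)
    (u : Fin M → Fin LM → ZMod 2) :
    Set.ncard { S' ∈ chanOut t 0 ε₂ I u | isIndexed I S' }
      ≤ M.choose t * (ballB ε₂ LM) ^ t ∧
    Set.ncard { S' ∈ chanOut t m ε₂ I u | isIndexed I S' }
      ≤ M.choose t * t.factorial * (ballB ε₂ LM) ^ t :=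
  count_indexed_outputs_general M m LM t ε₂ ht I hI u
end

section
/- If the anchoring property holds and at most t sequences are corrupted (with ≤ ε₁ index errors and ≤ ε₂ anchor/data errors each), then for every position i ∈ {1,...,M} at which the correct anchor a_i is known, there is exactly one received sequence x' with d(I(i), index(x')) ≤ ε₁ and d(a_i, anchor(x')) ≤ ε₂, namely the corrupted version of the original sequence x_i. -/
section HammingAddGroup

variable {ι : Type*} [Fintype ι] {β : ι → Type*} [∀ i, DecidableEq (β i)] [∀ i, AddGroup (β i)]

theorem hammingDist_self_add_right (x e : ∀ i, β i) : hammingDist x (x + e) = hammingNorm e := by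
  rw [hammingDist_eq_hammingNorm, neg_add_cancel_left]

theorem hammingDist_le_hammingDist_add_hammingNorm (x y e : ∀ i, β i) :
    hammingDist x y ≤ hammingDist x (y + e) + hammingNorm e := by
  calc hammingDist x y ≤ hammingDist x (y + e) + hammingDist (y + e) y := hammingDist_triangle _ _ _
    _ = hammingDist x (y + e) + hammingNorm e := by
      rw [hammingDist_comm (y + e), hammingDist_self_add_right]

end HammingAddGroup

theorem anchor_exactly_one_match_general (M m l ε₁ ε₂ : ℕ)
    (I : Fin M → Fin m → ZMod 2)
    (a : Fin M → Fin l → ZMod 2)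
    (hanchor : ∀ i j, i ≠ j → hammingDist (I i) (I j) ≤ 2 * ε₁ →
      2 * ε₂ < hammingDist (a i) (a j))
    (eI : Fin M → Fin m → ZMod 2) (eA : Fin M → Fin l → ZMod 2)
    (heI : ∀ j, hammingNorm (eI j) ≤ ε₁) (heA : ∀ j, hammingNorm (eA j) ≤ ε₂)
    (i : Fin M) :
    (hammingDist (I i) (I i + eI i) ≤ ε₁ ∧ hammingDist (a i) (a i + eA i) ≤ ε₂) ∧
    ∀ j : Fin M, hammingDist (I i) (I j + eI j) ≤ ε₁ →
      hammingDist (a i) (a j + eA j) ≤ ε₂ → j = i := by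
  refine ⟨⟨(hammingDist_self_add_right _ _).trans_le (heI i),
    (hammingDist_self_add_right _ _).trans_le (heA i)⟩, fun j hIj haj => ?_⟩
  by_contra hne
  have hIij : hammingDist (I i) (I j) ≤ 2 * ε₁ := two_mul ε₁ ▸
    (hammingDist_le_hammingDist_add_hammingNorm _ _ _).trans (add_le_add hIj (heI j))
  have haij : hammingDist (a i) (a j) ≤ 2 * ε₂ := two_mul ε₂ ▸
    (hammingDist_le_hammingDist_add_hammingNorm _ _ _).trans (add_le_add haj (heA j))
  exact (hanchor i j (Ne.symm hne) hIij).not_ge haij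

/-- if the anchoring property holds and each sequence `x_j = (I(j), a_j, v_j)`
is corrupted by at most `ε₁` index errors and at most `ε₂` anchor errors, then for every
position `i` at which the correct anchor `a_i` is known there is exactly one received
sequence whose index is within distance `ε₁` of `I(i)` and whose anchor is within distance
`ε₂` of `a_i`, namely the corrupted version of `x_i`. -/
theorem anchor_exactly_one_match (M m l k ε₁ ε₂ : ℕ)
    (I : Fin M → Fin m → ZMod 2) (hI : Function.Injective I)
    (a : Fin M → Fin l → ZMod 2) (v : Fin M → Fin k → ZMod 2)
    (hanchor : ∀ i j, i ≠ j → hammingDist (I i) (I j) ≤ 2 * ε₁ →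
      2 * ε₂ < hammingDist (a i) (a j))
    (eI : Fin M → Fin m → ZMod 2) (eA : Fin M → Fin l → ZMod 2)
    (eV : Fin M → Fin k → ZMod 2)
    (heI : ∀ j, hammingNorm (eI j) ≤ ε₁) (heA : ∀ j, hammingNorm (eA j) ≤ ε₂)
    (i : Fin M) :
    (hammingDist (I i) (I i + eI i) ≤ ε₁ ∧ hammingDist (a i) (a i + eA i) ≤ ε₂) ∧
    ∀ j : Fin M, hammingDist (I i) (I j + eI j) ≤ ε₁ →
      hammingDist (a i) (a j + eA j) ≤ ε₂ → j = i :=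
  anchor_exactly_one_match_general M m l ε₁ ε₂ I a hanchor eI eA heI heA i
end
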